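/- Let (V_1, V_2, A) be finitely valued random variables such that the joint pmf of (V_1, V_2) has full support on 𝒱_1 × 𝒱_2, A is conditionally independent of V_2 given V_1, and A is conditionally independent of V_1 given V_2. Then A is independent of the pair (V_1, V_2), i.e., I(V_1, V_2 ; A) = 0. -/

import Mathlib

open scoped BigOperators

noncomputable section

namespace SC

/-! ### Finite probability mass functions and information measures (base 2) -/

/-- `p` is a probability mass function on a finite type. -/
def IsPMF {α : Type*} [Fintype α] (p : α → ℝ) : Prop :=
  (∀ a, 0 ≤ p a) ∧ ∑ a, p a = 1

/-- Distribution (pushforward pmf) of the random variable `f` under the pmf `p`. -/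
def distOf {α β : Type*} [Fintype α] [DecidableEq β] (p : α → ℝ) (f : α → β) : β → ℝ :=
  fun b => ∑ a, if f a = b then p a else 0

/-- ℓ₁ (total variational) distance between two pmfs. -/
def l1dist {α : Type*} [Fintype α] (p q : α → ℝ) : ℝ := ∑ a, |p a - q a|

/-- Kullback–Leibler divergence (base 2), with the usual `0 log 0 = 0` conventions. -/
def klDiv {α : Type*} [Fintype α] (p q : α → ℝ) : ℝ :=
  ∑ a, p a * Real.logb 2 (p a / q a)

/-- Shannon entropy (base 2) of a pmf. -/
def Hpmf {α : Type*} [Fintype α] (p : α → ℝ) : ℝ :=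
  -∑ a, p a * Real.logb 2 (p a)

/-- Shannon entropy of a (finitely valued) random variable `f` under pmf `p`. -/
def entropy {Ω β : Type*} [Fintype Ω] [Fintype β] [DecidableEq β]
    (p : Ω → ℝ) (f : Ω → β) : ℝ := Hpmf (distOf p f)

/-- Conditional entropy `H(f | g)`. -/
def condEntropy {Ω β γ : Type*} [Fintype Ω] [Fintype β] [Fintype γ]
    [DecidableEq β] [DecidableEq γ] (p : Ω → ℝ) (f : Ω → β) (g : Ω → γ) : ℝ :=
  entropy p (fun ω => (f ω, g ω)) - entropy p g

/-- Mutual information `I(f ; g)`. -/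
def mutualInfo {Ω β γ : Type*} [Fintype Ω] [Fintype β] [Fintype γ]
    [DecidableEq β] [DecidableEq γ] (p : Ω → ℝ) (f : Ω → β) (g : Ω → γ) : ℝ :=
  entropy p f + entropy p g - entropy p (fun ω => (f ω, g ω))

/-- Conditional mutual information `I(f ; g | z)`. -/
def condMutualInfo {Ω β γ δ : Type*} [Fintype Ω] [Fintype β] [Fintype γ] [Fintype δ]
    [DecidableEq β] [DecidableEq γ] [DecidableEq δ]
    (p : Ω → ℝ) (f : Ω → β) (g : Ω → γ) (z : Ω → δ) : ℝ :=
  entropy p (fun ω => (f ω, z ω)) + entropy p (fun ω => (g ω, z ω))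
    - entropy p (fun ω => (f ω, g ω, z ω)) - entropy p z

/-- Conditional independence of `f` and `g` given `z` under the pmf `p`. -/
def CondIndep {Ω β γ δ : Type*} [Fintype Ω] [Fintype β] [Fintype γ] [Fintype δ]
    [DecidableEq β] [DecidableEq γ] [DecidableEq δ]
    (p : Ω → ℝ) (f : Ω → β) (g : Ω → γ) (z : Ω → δ) : Prop :=
  ∀ b c d, distOf p (fun ω => ((f ω, g ω), z ω)) ((b, c), d) * distOf p z d
    = distOf p (fun ω => (f ω, z ω)) (b, d) * distOf p (fun ω => (g ω, z ω)) (c, d)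

/-- Conditional distribution of `f` given `g` under `p` (uniform fallback on null events). -/
def condDist {Ω α β : Type*} [Fintype Ω] [Fintype α] [DecidableEq α] [DecidableEq β]
    (p : Ω → ℝ) (f : Ω → α) (g : Ω → β) : α → β → ℝ :=
  fun a b =>
    if distOf p g b = 0 then (Fintype.card α : ℝ)⁻¹
    else distOf p (fun ω => (f ω, g ω)) (a, b) / distOf p g b

/-- Size of an index set of rate `R` and blocklength `n`, i.e. `⟦1, 2^{nR}⟧`. -/
def codeSize (n : ℕ) (R : ℝ) : ℕ := max 1 ⌊(2 : ℝ) ^ ((n : ℝ) * R)⌋₊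

lemma codeSize_pos (n : ℕ) (R : ℝ) : 0 < codeSize n R :=
  lt_of_lt_of_le one_pos (le_max_left _ _)

/-
Write `X = V₁`, `Y = V₂`, `Z = A`. The two conditional independences say
`P(x,y,z) P(x) = P(z,x) P(x,y)` and `P(x,y,z) P(y) = P(z,y) P(x,y)`. Eliminating `P(x,y,z)`
and cancelling `P(x,y) > 0` gives `P(z,x) P(y) = P(z,y) P(x)`; summing over `y` yields
`P(z,x) = P(z) P(x)`, and feeding this back into the first identity gives
`P(x,y,z) = P(x,y) P(z)`. Entropy is additive on product distributions, so `I(X,Y ; Z) = 0`.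
-/

section Distribution

variable {Ω β γ : Type*} [Fintype Ω] [DecidableEq β] [DecidableEq γ]

lemma distOf_nonneg {p : Ω → ℝ} (hp : ∀ ω, 0 ≤ p ω) (f : Ω → β) (b : β) :
    0 ≤ distOf p f b :=
  Finset.sum_nonneg fun ω _ => by split <;> simp [hp ω]

lemma distOf_congr (p : Ω → ℝ) {f : Ω → β} {g : Ω → γ} {b : β} {c : γ}
    (h : ∀ ω, f ω = b ↔ g ω = c) : distOf p f b = distOf p g c :=
  Finset.sum_congr rfl fun ω _ => if_congr (h ω) rfl rfl

lemma sum_distOf [Fintype β] (p : Ω → ℝ) (f : Ω → β) : ∑ b, distOf p f b = ∑ ω, p ω := by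
  unfold distOf
  rw [Finset.sum_comm]
  simp

lemma sum_distOf_pair_right [Fintype γ] (p : Ω → ℝ) (f : Ω → β) (g : Ω → γ) (b : β) :
    ∑ c, distOf p (fun ω => (f ω, g ω)) (b, c) = distOf p f b := by
  unfold distOf
  rw [Finset.sum_comm]
  refine Finset.sum_congr rfl fun ω _ => ?_
  by_cases h : f ω = b <;> simp [Prod.ext_iff, h]

lemma distOf_pair_le_left [Fintype γ] {p : Ω → ℝ} (hp : ∀ ω, 0 ≤ p ω) (f : Ω → β)
    (g : Ω → γ) (b : β) (c : γ) : distOf p (fun ω => (f ω, g ω)) (b, c) ≤ distOf p f b := by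
  rw [← sum_distOf_pair_right p f g b]
  exact Finset.single_le_sum (fun c _ => distOf_nonneg hp _ (b, c)) (Finset.mem_univ c)

end Distribution

lemma Hpmf_mul {β γ : Type*} [Fintype β] [Fintype γ] {u : β → ℝ} {w : γ → ℝ}
    (hu : ∑ b, u b = 1) (hw : ∑ c, w c = 1) :
    Hpmf (fun x : β × γ => u x.1 * w x.2) = Hpmf u + Hpmf w := by
  have hlog : ∀ b c, u b * w c * Real.logb 2 (u b * w c)
      = w c * (u b * Real.logb 2 (u b)) + u b * (w c * Real.logb 2 (w c)) := by
    intro b c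
    rcases eq_or_ne (u b) 0 with hb | hb
    · simp [hb]
    rcases eq_or_ne (w c) 0 with hc | hc
    · simp [hc]
    rw [Real.logb_mul hb hc]
    ring
  simp only [Hpmf, Fintype.sum_prod_type, hlog, Finset.sum_add_distrib, ← Finset.sum_mul,
    ← Finset.mul_sum, hu, hw]
  ring

lemma mutualInfo_eq_zero_of_distOf_pair_eq_mul {Ω β γ : Type*} [Fintype Ω] [Fintype β]
    [Fintype γ] [DecidableEq β] [DecidableEq γ] {p : Ω → ℝ} (hp : ∑ ω, p ω = 1)
    {f : Ω → β} {g : Ω → γ}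
    (h : ∀ b c, distOf p (fun ω => (f ω, g ω)) (b, c) = distOf p f b * distOf p g c) :
    mutualInfo p f g = 0 := by
  have hfac : distOf p (fun ω => (f ω, g ω)) = fun x => distOf p f x.1 * distOf p g x.2 :=
    funext fun x => h x.1 x.2
  rw [mutualInfo, entropy, entropy, entropy, hfac,
    Hpmf_mul (by rw [sum_distOf, hp]) (by rw [sum_distOf, hp])]
  ring

section CondIndep

variable {Ω 𝒳 𝒴 𝒵 : Type*} [Fintype Ω] [Fintype 𝒳] [Fintype 𝒴] [Fintype 𝒵]
  [DecidableEq 𝒳] [DecidableEq 𝒴] [DecidableEq 𝒵]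
  {p : Ω → ℝ} {X : Ω → 𝒳} {Y : Ω → 𝒴} {Z : Ω → 𝒵}

lemma CondIndep.distOf_mul_left (h : CondIndep p Z Y X) (x : 𝒳) (y : 𝒴) (z : 𝒵) :
    distOf p (fun ω => ((X ω, Y ω), Z ω)) ((x, y), z) * distOf p X x
      = distOf p (fun ω => (Z ω, X ω)) (z, x) * distOf p (fun ω => (X ω, Y ω)) (x, y) := by
  have hXYZ : distOf p (fun ω => ((Z ω, Y ω), X ω)) ((z, y), x)
      = distOf p (fun ω => ((X ω, Y ω), Z ω)) ((x, y), z) :=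
    distOf_congr p fun ω => by simp only [Prod.mk.injEq]; tauto
  have hXY : distOf p (fun ω => (Y ω, X ω)) (y, x) = distOf p (fun ω => (X ω, Y ω)) (x, y) :=
    distOf_congr p fun ω => by simp only [Prod.mk.injEq]; tauto
  rw [← hXYZ, ← hXY]
  exact h z y x

lemma CondIndep.distOf_mul_right (h : CondIndep p Z X Y) (x : 𝒳) (y : 𝒴) (z : 𝒵) :
    distOf p (fun ω => ((X ω, Y ω), Z ω)) ((x, y), z) * distOf p Y y
      = distOf p (fun ω => (Z ω, Y ω)) (z, y) * distOf p (fun ω => (X ω, Y ω)) (x, y) := by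
  have hXYZ : distOf p (fun ω => ((Z ω, X ω), Y ω)) ((z, x), y)
      = distOf p (fun ω => ((X ω, Y ω), Z ω)) ((x, y), z) :=
    distOf_congr p fun ω => by simp only [Prod.mk.injEq]; tauto
  rw [← hXYZ]
  exact h z x y

lemma distOf_pair_eq_mul_of_condIndep_of_condIndep (hp : IsPMF p)
    (hfull : ∀ v : 𝒳 × 𝒴, 0 < distOf p (fun ω => (X ω, Y ω)) v)
    (h₁ : CondIndep p Z Y X) (h₂ : CondIndep p Z X Y) (z : 𝒵) (x : 𝒳) :
    distOf p (fun ω => (Z ω, X ω)) (z, x) = distOf p Z z * distOf p X x := by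
  have hcross : ∀ y, distOf p (fun ω => (Z ω, X ω)) (z, x) * distOf p Y y
      = distOf p (fun ω => (Z ω, Y ω)) (z, y) * distOf p X x := by
    intro y
    refine mul_right_cancel₀ (hfull (x, y)).ne' ?_
    linear_combination distOf p X x * h₂.distOf_mul_right x y z
      - distOf p Y y * h₁.distOf_mul_left x y z
  calc distOf p (fun ω => (Z ω, X ω)) (z, x)
      = ∑ y, distOf p (fun ω => (Z ω, X ω)) (z, x) * distOf p Y y := by
        rw [← Finset.mul_sum, sum_distOf, hp.2, mul_one]
    _ = ∑ y, distOf p (fun ω => (Z ω, Y ω)) (z, y) * distOf p X x :=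
        Finset.sum_congr rfl fun y _ => hcross y
    _ = distOf p Z z * distOf p X x := by rw [← Finset.sum_mul, sum_distOf_pair_right]

lemma distOf_triple_eq_mul_of_condIndep_of_condIndep (hp : IsPMF p)
    (hfull : ∀ v : 𝒳 × 𝒴, 0 < distOf p (fun ω => (X ω, Y ω)) v)
    (h₁ : CondIndep p Z Y X) (h₂ : CondIndep p Z X Y) (v : 𝒳 × 𝒴) (z : 𝒵) :
    distOf p (fun ω => ((X ω, Y ω), Z ω)) (v, z)
      = distOf p (fun ω => (X ω, Y ω)) v * distOf p Z z := by
  obtain ⟨x, y⟩ := v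
  have hX : 0 < distOf p X x := (hfull (x, y)).trans_le (distOf_pair_le_left hp.1 X Y x y)
  refine mul_right_cancel₀ hX.ne' ?_
  rw [h₁.distOf_mul_left x y z,
    distOf_pair_eq_mul_of_condIndep_of_condIndep hp hfull h₁ h₂ z x]
  ring

end CondIndep

/-- If the joint pmf of `(V_1, V_2)` has full support, `A` is
conditionally independent of `V_2` given `V_1`, and `A` is conditionally independent of
`V_1` given `V_2`, then `A` is independent of the pair `(V_1, V_2)`, i.e.
`I(V_1, V_2 ; A) = 0`. -/
theorem statement_13 {Ω 𝒱₁ 𝒱₂ 𝒜 : Type}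
    [Fintype Ω] [Fintype 𝒱₁] [Fintype 𝒱₂] [Fintype 𝒜]
    [DecidableEq 𝒱₁] [DecidableEq 𝒱₂] [DecidableEq 𝒜]
    (p : Ω → ℝ) (hp : IsPMF p)
    (V₁ : Ω → 𝒱₁) (V₂ : Ω → 𝒱₂) (A : Ω → 𝒜)
    (hfull : ∀ v : 𝒱₁ × 𝒱₂, 0 < distOf p (fun ω => (V₁ ω, V₂ ω)) v)
    (h1 : CondIndep p A V₂ V₁)
    (h2 : CondIndep p A V₁ V₂) :
    mutualInfo p (fun ω => (V₁ ω, V₂ ω)) A = 0 :=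
  mutualInfo_eq_zero_of_distOf_pair_eq_mul hp.2
    (distOf_triple_eq_mul_of_condIndep_of_condIndep hp hfull h1 h2)

end SC
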